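/- Let R ∈ Matrix (Fin m) (Fin m) ℝ be symmetric positive definite, B ∈ Matrix (Fin c) (Fin m) ℝ, ρ ∈ Fin c → ℝ, and μ ∈ Fin m → ℝ. Define u⋆ = μ - R⁻¹.mulVec (Bᵀ.mulVec ρ). Then the mode insertion gradient satisfies ρ ⬝ᵥ (B.mulVec (u⋆ - μ)) = -(Bᵀ.mulVec ρ) ⬝ᵥ (R⁻¹.mulVec (Bᵀ.mulVec ρ)) ≤ 0, with equality iff Bᵀ.mulVec ρ = 0. -/

import Mathlib

/-!
Since `u⋆ - μ = -R⁻¹ Bᵀ ρ`, the mode insertion gradient is minus the quadratic form of the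
positive definite matrix `R⁻¹` evaluated at `Bᵀ ρ`.
-/

open Matrix

namespace Matrix

variable {m n R : Type*} [Fintype m] [Fintype n]

theorem dotProduct_mulVec_mulVec_transpose_mulVec [CommRing R]
    (A : Matrix n n R) (B : Matrix m n R) (ρ : m → R) :
    ρ ⬝ᵥ B *ᵥ (A *ᵥ (Bᵀ *ᵥ ρ)) = (Bᵀ *ᵥ ρ) ⬝ᵥ A *ᵥ (Bᵀ *ᵥ ρ) := by
  rw [dotProduct_mulVec, ← mulVec_transpose]

theorem PosDef.star_dotProduct_mulVec_eq_zero_iff [Ring R] [PartialOrder R] [StarRing R]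
    {M : Matrix n n R} (hM : M.PosDef) {x : n → R} :
    star x ⬝ᵥ M *ᵥ x = 0 ↔ x = 0 :=
  ⟨fun h ↦ by_contra fun hx ↦ (hM.dotProduct_mulVec_pos hx).ne' h, by rintro rfl; simp⟩

end Matrix

theorem mode_insertion_gradient_nonpos (m c : ℕ)
    (R : Matrix (Fin m) (Fin m) ℝ) (hR : R.PosDef)
    (B : Matrix (Fin c) (Fin m) ℝ) (ρ : Fin c → ℝ) (μ : Fin m → ℝ) :
    let ustar : Fin m → ℝ := μ - R⁻¹.mulVec (Bᵀ.mulVec ρ)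
    ρ ⬝ᵥ B.mulVec (ustar - μ) = -((Bᵀ.mulVec ρ) ⬝ᵥ R⁻¹.mulVec (Bᵀ.mulVec ρ)) ∧
    ρ ⬝ᵥ B.mulVec (ustar - μ) ≤ 0 ∧
    (ρ ⬝ᵥ B.mulVec (ustar - μ) = 0 ↔ Bᵀ.mulVec ρ = 0) := by
  intro ustar
  have hgrad : ρ ⬝ᵥ B *ᵥ (ustar - μ) = -((Bᵀ *ᵥ ρ) ⬝ᵥ R⁻¹ *ᵥ (Bᵀ *ᵥ ρ)) := by
    rw [sub_sub_cancel_left, mulVec_neg, dotProduct_neg,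
      dotProduct_mulVec_mulVec_transpose_mulVec]
  have hRinv : R⁻¹.PosDef := hR.inv
  rw [hgrad, neg_nonpos, neg_eq_zero]
  exact ⟨rfl, hRinv.posSemidef.dotProduct_mulVec_nonneg _,
    hRinv.star_dotProduct_mulVec_eq_zero_iff⟩
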